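/- arXiv:1209.1625 — 2 statements merged into one kernel-verified Lean document; each statement's English description precedes it below -/
import Mathlib

section
/- Under the permutation null distribution, for n ≥ 4 and 1 ≤ t ≤ n−1, the variance of the between-group edge count satisfies Var[R_G(t)] = p2(t)·|G| + (p1(t)/2 − p2(t))·Σ_i |G_i|² + (p2(t) − p1(t)²)·|G|². -/
open Finset Filter Asymptotics MeasureTheory Topology ProbabilityTheory

namespace GraphCP

noncomputable def edgeFS {n : ℕ} (G : SimpleGraph (Fin n)) : Finset (Sym2 (Fin n)) :=
  letI : DecidableRel G.Adj := Classical.decRel _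
  G.edgeFinset

noncomputable def deg {n : ℕ} (G : SimpleGraph (Fin n)) (i : Fin n) : ℕ :=
  letI : DecidableRel G.Adj := Classical.decRel _
  G.degree i

/-- Indicator that the two endpoints of an edge lie in different groups. -/
def crossInd {n : ℕ} (g : Fin n → Bool) : Sym2 (Fin n) → ℝ :=
  Sym2.lift ⟨fun i j => if g i ≠ g j then 1 else 0, by
    intro i j
    by_cases h : g i = g j <;> simp [h, Ne, eq_comm]⟩

/-- `g_i(t) = 1{π(i) > t}`, where the label of `i` is `π(i) = (f i).val + 1 ∈ {1,…,n}`. -/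
def gOne (n t : ℕ) (f : Fin n → Fin n) (i : Fin n) : Bool :=
  decide (t < (f i : ℕ) + 1)

/-- `g_i(t₁,t₂) = 1{t₁ < π(i) ≤ t₂}`. -/
def gTwo (n t₁ t₂ : ℕ) (f : Fin n → Fin n) (i : Fin n) : Bool :=
  decide (t₁ < (f i : ℕ) + 1 ∧ (f i : ℕ) + 1 ≤ t₂)

noncomputable def RoneF {n : ℕ} (G : SimpleGraph (Fin n)) (t : ℕ) (f : Fin n → Fin n) : ℝ :=
  ∑ e ∈ edgeFS G, crossInd (gOne n t f) e

noncomputable def Rone {n : ℕ} (G : SimpleGraph (Fin n)) (t : ℕ) (π : Equiv.Perm (Fin n)) : ℝ :=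
  RoneF G t ⇑π

noncomputable def Rtwo {n : ℕ} (G : SimpleGraph (Fin n)) (t₁ t₂ : ℕ)
    (π : Equiv.Perm (Fin n)) : ℝ :=
  ∑ e ∈ edgeFS G, crossInd (gTwo n t₁ t₂ ⇑π) e

noncomputable def permExp (n : ℕ) (X : Equiv.Perm (Fin n) → ℝ) : ℝ :=
  (∑ π : Equiv.Perm (Fin n), X π) / (Nat.factorial n : ℝ)

noncomputable def permVar (n : ℕ) (X : Equiv.Perm (Fin n) → ℝ) : ℝ :=
  permExp n (fun π => (X π - permExp n X) ^ 2)

noncomputable def permCov (n : ℕ) (X Y : Equiv.Perm (Fin n) → ℝ) : ℝ :=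
  permExp n (fun π => (X π - permExp n X) * (Y π - permExp n Y))

noncomputable def p1 (n t : ℕ) : ℝ := 2 * t * ((n : ℝ) - t) / ((n : ℝ) * ((n : ℝ) - 1))

noncomputable def p2 (n t : ℕ) : ℝ :=
  4 * t * ((t : ℝ) - 1) * ((n : ℝ) - t) * ((n : ℝ) - t - 1) /
    ((n : ℝ) * ((n : ℝ) - 1) * ((n : ℝ) - 2) * ((n : ℝ) - 3))

noncomputable def numEdges {n : ℕ} (G : SimpleGraph (Fin n)) : ℝ := ((edgeFS G).card : ℝ)

noncomputable def degSq {n : ℕ} (G : SimpleGraph (Fin n)) : ℝ :=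
  ∑ i : Fin n, (deg G i : ℝ) ^ 2

noncomputable def Zone {n : ℕ} (G : SimpleGraph (Fin n)) (t : ℕ) (π : Equiv.Perm (Fin n)) : ℝ :=
  -(Rone G t π - permExp n (Rone G t)) / Real.sqrt (permVar n (Rone G t))

noncomputable def Ztwo {n : ℕ} (G : SimpleGraph (Fin n)) (t₁ t₂ : ℕ)
    (π : Equiv.Perm (Fin n)) : ℝ :=
  -(Rtwo G t₁ t₂ π - permExp n (Rtwo G t₁ t₂)) / Real.sqrt (permVar n (Rtwo G t₁ t₂))


/-! Let `c_e(π)` be the indicator that the edge `e` is cut, so that `R_G(t) = ∑_{e ∈ G} c_e`, and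
let `h_i = 1{π(i) > t}`. Restricting a uniform permutation to `k` points gives a uniform injection,
so `k` given points all land above `t` with probability `(n-t)_k / (n)_k`. Expanding
`c_{ij} = h_i + h_j - 2 h_i h_j` (and using `h_i² = h_i`) then gives `E c_e = p1(t)`, and
`E[c_e c_f] = p1, p1/2, p2` according as `e, f` share two, one or no vertices, i.e.
`E[c_e c_f] = p2 + (p1/2 - p2) |e ∩ f| + p2 [e = f]`. Summing over pairs of edges with
`∑_{e,f} |e ∩ f| = ∑_v |G_v|²` yields `E[R²]`, and `Var R = E[R²] - (E R)²`. -/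

section PermRestrict

variable {α : Type*}

def permRestrict (S : Finset α) (π : Equiv.Perm α) : S ↪ α :=
  (Function.Embedding.subtype _).trans π.toEmbedding

@[simp]
theorem permRestrict_apply (S : Finset α) (π : Equiv.Perm α) (i : S) :
    permRestrict S π i = π i :=
  rfl

variable [Fintype α] [DecidableEq α]

theorem exists_permRestrict_eq (S : Finset α) (f : S ↪ α) : ∃ σ, permRestrict S σ = f := by
  classical
  refine ⟨f.toEquivRange.extendSubtype, ?_⟩
  ext i
  simp [Equiv.extendSubtype_apply_of_mem _ _ i.2]

theorem card_permRestrict_fiber_le (S : Finset α) (f g : S ↪ α) :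
    #{π | permRestrict S π = f} ≤ #{π | permRestrict S π = g} := by
  obtain ⟨σ, rfl⟩ := exists_permRestrict_eq S f
  obtain ⟨τ, rfl⟩ := exists_permRestrict_eq S g
  refine card_le_card_of_injOn (τ * σ⁻¹ * ·) (fun π hπ => ?_) (fun _ _ _ _ h => mul_left_cancel h)
  simp only [coe_filter, mem_univ, true_and, Set.mem_ofPred_eq] at hπ ⊢
  ext i
  have hπi : π i = σ i := DFunLike.congr_fun hπ i
  simp [hπi]

theorem card_permRestrict_fiber (S : Finset α) (f g : S ↪ α) :
    #{π | permRestrict S π = f} = #{π | permRestrict S π = g} :=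
  (card_permRestrict_fiber_le S f g).antisymm (card_permRestrict_fiber_le S g f)

theorem card_embedding_smul_sum_permRestrict {M : Type*} [AddCommMonoid M] (S : Finset α)
    (F : (S ↪ α) → M) :
    Fintype.card (S ↪ α) • ∑ π : Equiv.Perm α, F (permRestrict S π)
      = (Fintype.card α).factorial • ∑ f, F f := by
  set c := #{π | permRestrict S π = permRestrict S 1}
  have hfiber (f : S ↪ α) : #{π | permRestrict S π = f} = c := card_permRestrict_fiber S f _
  have hsum : ∑ π : Equiv.Perm α, F (permRestrict S π) = c • ∑ f, F f := by
    rw [← Finset.sum_fiberwise univ (permRestrict S), Finset.smul_sum]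
    refine Finset.sum_congr rfl fun f _ => ?_
    rw [Finset.sum_congr rfl fun π hπ => congrArg F (Finset.mem_filter.1 hπ).2, Finset.sum_const,
      hfiber]
  have hcard : (Fintype.card α).factorial = Fintype.card (S ↪ α) * c := by
    rw [← Fintype.card_perm, ← Finset.card_univ,
      Finset.card_eq_sum_card_fiberwise (f := permRestrict S) (t := univ) (fun _ _ => mem_univ _)]
    simp [hfiber]
  rw [hsum, hcard, smul_smul]

theorem descFactorial_mul_card_perm_mapsTo (S T : Finset α) :
    (Fintype.card α).descFactorial #S * #{π : Equiv.Perm α | ∀ i ∈ S, π i ∈ T}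
      = (Fintype.card α).factorial * (#T).descFactorial #S := by
  have h := card_embedding_smul_sum_permRestrict S fun f => if ∀ i, f i ∈ T then 1 else 0
  have hT : #{f : S ↪ α | ∀ i, f i ∈ T} = Fintype.card (S ↪ T) := by
    rw [← Fintype.card_subtype]
    exact Fintype.card_congr
      { toFun := fun f => f.1.codRestrict (T : Set α) f.2
        invFun := fun g => ⟨g.trans (Function.Embedding.subtype _), fun i => (g i).2⟩
        left_inv := fun _ => rfl
        right_inv := fun _ => rfl }
  rw [Finset.sum_boole, Finset.sum_boole, hT] at h
  simp only [Fintype.card_embedding_eq, Fintype.card_coe, smul_eq_mul, Nat.cast_id] at h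
  convert h using 3
  simp

end PermRestrict

section

variable {n t : ℕ}

theorem permExp_add (X Y : Equiv.Perm (Fin n) → ℝ) :
    permExp n (fun π => X π + Y π) = permExp n X + permExp n Y := by
  simp only [permExp, Finset.sum_add_distrib, add_div]

theorem permExp_sub (X Y : Equiv.Perm (Fin n) → ℝ) :
    permExp n (fun π => X π - Y π) = permExp n X - permExp n Y := by
  simp only [permExp, Finset.sum_sub_distrib, sub_div]

theorem permExp_const_mul (c : ℝ) (X : Equiv.Perm (Fin n) → ℝ) :
    permExp n (fun π => c * X π) = c * permExp n X := by
  simp only [permExp, ← Finset.mul_sum, mul_div_assoc]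

theorem permExp_sum {ι : Type*} (s : Finset ι) (X : ι → Equiv.Perm (Fin n) → ℝ) :
    permExp n (fun π => ∑ x ∈ s, X x π) = ∑ x ∈ s, permExp n (X x) := by
  simp only [permExp, Finset.sum_comm (s := s), Finset.sum_div]

theorem permExp_const (c : ℝ) : permExp n (fun _ => c) = c := by
  simp [permExp, Fintype.card_perm, Nat.factorial_ne_zero]

theorem permVar_eq_sub (X : Equiv.Perm (Fin n) → ℝ) :
    permVar n X = permExp n (fun π => X π ^ 2) - permExp n X ^ 2 := by
  have hsq : (fun π => (X π - permExp n X) ^ 2)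
      = fun π => X π ^ 2 - 2 * permExp n X * X π + permExp n X ^ 2 := by
    funext π; ring
  rw [permVar, hsq]
  simp only [permExp_add, permExp_sub, permExp_const_mul, permExp_const]
  ring

def highInd (t : ℕ) (v : Fin n) : ℝ := if t ≤ (v : ℕ) then 1 else 0

noncomputable def highMoment (n t k : ℕ) : ℝ := ((n - t).descFactorial k : ℝ) / n.descFactorial k

theorem card_filter_le_val (ht : t ≤ n) : #{v : Fin n | t ≤ (v : ℕ)} = n - t := by
  have h := Finset.card_filter_add_card_filter_not (s := univ) fun v : Fin n => (v : ℕ) < t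
  simp only [not_lt, card_univ, Fintype.card_fin, Fin.card_filter_val_lt, min_eq_right ht] at h
  omega

theorem permExp_prod_highInd (ht : t ≤ n) (S : Finset (Fin n)) :
    permExp n (fun π => ∏ i ∈ S, highInd t (π i)) = highMoment n t #S := by
  have h := descFactorial_mul_card_perm_mapsTo S {v : Fin n | t ≤ (v : ℕ)}
  simp only [Fintype.card_fin, card_filter_le_val ht, mem_filter, mem_univ, true_and] at h
  have hS : #S ≤ n := by simpa using card_le_univ S
  have hd : (n.descFactorial #S : ℝ) ≠ 0 := by
    exact_mod_cast (Nat.descFactorial_pos.2 hS).ne'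
  rw [permExp, highMoment, div_eq_div_iff (by positivity) hd]
  have hR := congrArg (Nat.cast : ℕ → ℝ) h
  push_cast [Finset.natCast_card_filter] at hR
  simp only [highInd, Finset.prod_boole]
  rw [mul_comm, mul_comm ((n - t).descFactorial #S : ℝ)]
  convert hR

theorem permExp_highInd (ht : t ≤ n) (a : Fin n) :
    permExp n (fun π => highInd t (π a)) = highMoment n t 1 := by
  simpa using permExp_prod_highInd ht {a}

theorem permExp_highInd_mul₂ (ht : t ≤ n) {a b : Fin n} (hab : a ≠ b) :
    permExp n (fun π => highInd t (π a) * highInd t (π b)) = highMoment n t 2 := by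
  simpa [hab] using permExp_prod_highInd ht {a, b}

theorem permExp_highInd_mul₃ (ht : t ≤ n) {a b c : Fin n} (hab : a ≠ b) (hac : a ≠ c)
    (hbc : b ≠ c) :
    permExp n (fun π => highInd t (π a) * highInd t (π b) * highInd t (π c)) =
      highMoment n t 3 := by
  simpa [hab, hac, hbc, mul_assoc] using permExp_prod_highInd ht {a, b, c}

theorem permExp_highInd_mul₄ (ht : t ≤ n) {a b c d : Fin n} (hab : a ≠ b) (hac : a ≠ c)
    (had : a ≠ d) (hbc : b ≠ c) (hbd : b ≠ d) (hcd : c ≠ d) :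
    permExp n (fun π => highInd t (π a) * highInd t (π b) * highInd t (π c) * highInd t (π d)) =
      highMoment n t 4 := by
  simpa [hab, hac, had, hbc, hbd, hcd, mul_assoc] using permExp_prod_highInd ht {a, b, c, d}

theorem p1_eq_highMoment (ht : t ≤ n) (hn : 2 ≤ n) :
    p1 n t = 2 * highMoment n t 1 - 2 * highMoment n t 2 := by
  have hn' : (2 : ℝ) ≤ n := by exact_mod_cast hn
  simp only [p1, highMoment, ← descPochhammer_eval_eq_descFactorial ℝ, descPochhammer_succ_eval,
    descPochhammer_zero, Polynomial.eval_one, Nat.cast_sub ht]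
  field_simp [show (n : ℝ) - 1 ≠ 0 by linarith, show (n : ℝ) ≠ 0 by linarith]
  ring

theorem p2_eq_highMoment (ht : t ≤ n) (hn : 4 ≤ n) :
    p2 n t = 4 * highMoment n t 2 - 8 * highMoment n t 3 + 4 * highMoment n t 4 := by
  have hn' : (4 : ℝ) ≤ n := by exact_mod_cast hn
  simp only [p2, highMoment, ← descPochhammer_eval_eq_descFactorial ℝ, descPochhammer_succ_eval,
    descPochhammer_zero, Polynomial.eval_one, Nat.cast_sub ht]
  field_simp [show (n : ℝ) - 3 ≠ 0 by linarith, show (n : ℝ) - 2 ≠ 0 by linarith,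
    show (n : ℝ) - 1 ≠ 0 by linarith, show (n : ℝ) ≠ 0 by linarith]
  ring

theorem crossInd_mul_self (g : Fin n → Bool) (e : Sym2 (Fin n)) :
    crossInd g e * crossInd g e = crossInd g e := by
  induction e with
  | h i j => simp only [crossInd, Sym2.lift_mk]; split_ifs <;> norm_num

theorem crossInd_gOne_mk (f : Fin n → Fin n) (i j : Fin n) :
    crossInd (gOne n t f) s(i, j) =
      highInd t (f i) + highInd t (f j) - 2 * (highInd t (f i) * highInd t (f j)) := by
  simp only [crossInd, Sym2.lift_mk, gOne, highInd, Nat.lt_succ_iff]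
  by_cases hi : t ≤ (f i : ℕ) <;> by_cases hj : t ≤ (f j : ℕ) <;> norm_num [hi, hj]

theorem permExp_crossInd_mk (ht : t ≤ n) {i j : Fin n} (hij : i ≠ j) :
    permExp n (fun π => crossInd (gOne n t π) s(i, j)) = p1 n t := by
  simp only [crossInd_gOne_mk, permExp_sub, permExp_add, permExp_const_mul, permExp_highInd ht,
    permExp_highInd_mul₂ ht hij]
  rw [p1_eq_highMoment ht (by omega)]
  ring

theorem permExp_crossInd_mk_mul_mk_common_fst (ht : t ≤ n) {a b c : Fin n} (hab : a ≠ b)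
    (hac : a ≠ c) (hbc : b ≠ c) :
    permExp n (fun π => crossInd (gOne n t π) s(a, b) * crossInd (gOne n t π) s(a, c)) =
      p1 n t / 2 := by
  have hprod (π : Equiv.Perm (Fin n)) :
      crossInd (gOne n t π) s(a, b) * crossInd (gOne n t π) s(a, c) =
        highInd t (π a) - highInd t (π a) * highInd t (π b)
          - highInd t (π a) * highInd t (π c) + highInd t (π b) * highInd t (π c) := by
    simp only [crossInd_gOne_mk, highInd]
    split_ifs <;> norm_num
  simp only [hprod, permExp_sub, permExp_add, permExp_highInd ht, permExp_highInd_mul₂ ht hab,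
    permExp_highInd_mul₂ ht hac, permExp_highInd_mul₂ ht hbc]
  rw [p1_eq_highMoment ht (by omega)]
  ring

theorem permExp_crossInd_mk_mul_mk_disjoint (ht : t ≤ n) {i j k l : Fin n} (hij : i ≠ j)
    (hik : i ≠ k) (hil : i ≠ l) (hjk : j ≠ k) (hjl : j ≠ l) (hkl : k ≠ l) :
    permExp n (fun π => crossInd (gOne n t π) s(i, j) * crossInd (gOne n t π) s(k, l)) =
      p2 n t := by
  have hprod (π : Equiv.Perm (Fin n)) :
      crossInd (gOne n t π) s(i, j) * crossInd (gOne n t π) s(k, l) =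
        highInd t (π i) * highInd t (π k) + highInd t (π i) * highInd t (π l)
          + highInd t (π j) * highInd t (π k) + highInd t (π j) * highInd t (π l)
          - 2 * (highInd t (π i) * highInd t (π k) * highInd t (π l))
          - 2 * (highInd t (π j) * highInd t (π k) * highInd t (π l))
          - 2 * (highInd t (π i) * highInd t (π j) * highInd t (π k))
          - 2 * (highInd t (π i) * highInd t (π j) * highInd t (π l))
          + 4 * (highInd t (π i) * highInd t (π j) * highInd t (π k) * highInd t (π l)) := by
    simp only [crossInd_gOne_mk]
    ring
  simp only [hprod, permExp_sub, permExp_add, permExp_const_mul, permExp_highInd_mul₂ ht hik,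
    permExp_highInd_mul₂ ht hil, permExp_highInd_mul₂ ht hjk, permExp_highInd_mul₂ ht hjl,
    permExp_highInd_mul₃ ht hik hil hkl, permExp_highInd_mul₃ ht hjk hjl hkl,
    permExp_highInd_mul₃ ht hij hik hjk, permExp_highInd_mul₃ ht hij hil hjl,
    permExp_highInd_mul₄ ht hij hik hil hjk hjl hkl]
  -- four distinct points of `Fin n` force `4 ≤ n`
  rw [p2_eq_highMoment ht (by omega)]
  ring

theorem permExp_crossInd (ht : t ≤ n) {e : Sym2 (Fin n)} (he : ¬e.IsDiag) :
    permExp n (fun π => crossInd (gOne n t π) e) = p1 n t := by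
  induction e with
  | h i j => exact permExp_crossInd_mk ht he

/-- This is `p1`, `p1 / 2` or `p2` according as `e` and `f` share two, one or no vertices. -/
theorem permExp_crossInd_mul (ht : t ≤ n) {e f : Sym2 (Fin n)} (he : ¬e.IsDiag)
    (hf : ¬f.IsDiag) :
    permExp n (fun π => crossInd (gOne n t π) e * crossInd (gOne n t π) f) =
      p2 n t + (p1 n t / 2 - p2 n t) * #(e.toFinset ∩ f.toFinset)
        + p2 n t * if e = f then 1 else 0 := by
  by_cases hef : e = f
  · subst hef
    simp only [crossInd_mul_self, permExp_crossInd ht he, inter_self,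
      Sym2.card_toFinset_of_not_isDiag _ he]
    push_cast
    ring
  rw [if_neg hef]
  induction e with | h i j => ?_
  induction f with | h k l => ?_
  simp only [Sym2.mk_isDiag_iff] at he hf
  rcases eq_or_ne i k with rfl | hik
  · have hjl : j ≠ l := by rintro rfl; exact hef rfl
    rw [permExp_crossInd_mk_mul_mk_common_fst ht he hf hjl]
    simp [Sym2.toFinset_mk_eq, *]
  rcases eq_or_ne i l with rfl | hil
  · have hjk : j ≠ k := by rintro rfl; exact hef Sym2.eq_swap
    rw [Sym2.eq_swap (a := k), permExp_crossInd_mk_mul_mk_common_fst ht he hik hjk]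
    simp [Sym2.toFinset_mk_eq, *]
  rw [Sym2.eq_swap (a := i)]
  rcases eq_or_ne j k with rfl | hjk
  · rw [permExp_crossInd_mk_mul_mk_common_fst ht (Ne.symm he) hf hil]
    simp [Sym2.toFinset_mk_eq, *]
  rcases eq_or_ne j l with rfl | hjl
  · rw [Sym2.eq_swap (a := k),
      permExp_crossInd_mk_mul_mk_common_fst ht (Ne.symm he) (Ne.symm hf) hik]
    simp [Sym2.toFinset_mk_eq, *]
  rw [Sym2.eq_swap (a := j), permExp_crossInd_mk_mul_mk_disjoint ht he hik hil hjk hjl hf]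
  simp [Sym2.toFinset_mk_eq, *]

theorem not_isDiag_of_mem_edgeFS (G : SimpleGraph (Fin n)) {e : Sym2 (Fin n)}
    (he : e ∈ edgeFS G) : ¬e.IsDiag := by
  classical
  simp only [edgeFS, SimpleGraph.mem_edgeFinset] at he
  exact G.not_isDiag_of_mem_edgeSet he

theorem sum_edgeFS_ite_mem_eq_deg (G : SimpleGraph (Fin n)) (v : Fin n) :
    ∑ e ∈ edgeFS G, (if v ∈ e then 1 else 0 : ℝ) = deg G v := by
  classical
  rw [Finset.sum_boole, Nat.cast_inj]
  unfold edgeFS deg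
  rw [← G.card_incidenceFinset_eq_degree, G.incidenceFinset_eq_filter]

theorem sum_edgeFS_sum_edgeFS_card_inter_toFinset (G : SimpleGraph (Fin n)) :
    ∑ e ∈ edgeFS G, ∑ f ∈ edgeFS G, (#(e.toFinset ∩ f.toFinset) : ℝ) = degSq G := by
  have hinter (e f : Sym2 (Fin n)) : (#(e.toFinset ∩ f.toFinset) : ℝ) =
      ∑ v, (if v ∈ e then 1 else 0) * (if v ∈ f then 1 else 0) := by
    rw [show e.toFinset ∩ f.toFinset = ({v | v ∈ e ∧ v ∈ f} : Finset (Fin n)) by ext; simp,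
      Finset.natCast_card_filter]
    simp only [ite_zero_mul_ite_zero, mul_one]
  simp only [hinter]
  rw [Finset.sum_congr rfl fun _ _ => Finset.sum_comm, Finset.sum_comm]
  simp only [degSq, ← sum_edgeFS_ite_mem_eq_deg, sq, Finset.sum_mul_sum]

theorem permExp_Rone (ht : t ≤ n) (G : SimpleGraph (Fin n)) :
    permExp n (Rone G t) = p1 n t * numEdges G := by
  change permExp n (fun π => ∑ e ∈ edgeFS G, crossInd (gOne n t π) e) = _
  rw [permExp_sum, Finset.sum_congr rfl fun e he =>
    permExp_crossInd ht (not_isDiag_of_mem_edgeFS G he), Finset.sum_const, nsmul_eq_mul,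
    numEdges, mul_comm]

theorem permExp_Rone_sq (ht : t ≤ n) (G : SimpleGraph (Fin n)) :
    permExp n (fun π => Rone G t π ^ 2) =
      p2 n t * numEdges G ^ 2 + (p1 n t / 2 - p2 n t) * degSq G + p2 n t * numEdges G := by
  have hsq : (fun π => Rone G t π ^ 2) = fun π : Equiv.Perm (Fin n) =>
      ∑ e ∈ edgeFS G, ∑ f ∈ edgeFS G, crossInd (gOne n t π) e * crossInd (gOne n t π) f := by
    funext π
    rw [sq, Rone, RoneF, Finset.sum_mul_sum]
  rw [hsq]
  simp only [permExp_sum]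
  rw [Finset.sum_congr rfl fun e he => Finset.sum_congr rfl fun f hf => permExp_crossInd_mul ht
    (not_isDiag_of_mem_edgeFS G he) (not_isDiag_of_mem_edgeFS G hf)]
  have hdiag : ∑ e ∈ edgeFS G, ∑ f ∈ edgeFS G, (if e = f then 1 else 0 : ℝ) = numEdges G := by
    simp [Finset.sum_ite_eq, numEdges]
  simp only [Finset.sum_add_distrib, ← Finset.mul_sum, Finset.sum_const, nsmul_eq_mul,
    sum_edgeFS_sum_edgeFS_card_inter_toFinset, hdiag, numEdges]
  ring

end

theorem variance_R_one_general (n : ℕ) (G : SimpleGraph (Fin n))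
    (t : ℕ) (ht2 : t ≤ n - 1) :
    permVar n (Rone G t) =
      p2 n t * numEdges G + (p1 n t / 2 - p2 n t) * degSq G
        + (p2 n t - (p1 n t) ^ 2) * (numEdges G) ^ 2 := by
  have ht : t ≤ n := ht2.trans (Nat.sub_le n 1)
  rw [permVar_eq_sub, permExp_Rone_sq ht, permExp_Rone ht]
  ring

/-- Under the permutation null distribution, for `n ≥ 4` and `1 ≤ t ≤ n−1`,
`Var[R_G(t)] = p2(t)·|G| + (p1(t)/2 − p2(t))·Σᵢ|Gᵢ|² + (p2(t) − p1(t)²)·|G|²`. -/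
theorem variance_R_one (n : ℕ) (hn : 4 ≤ n) (G : SimpleGraph (Fin n))
    (t : ℕ) (ht1 : 1 ≤ t) (ht2 : t ≤ n - 1) :
    permVar n (Rone G t) =
      p2 n t * numEdges G + (p1 n t / 2 - p2 n t) * degSq G
        + (p2 n t - (p1 n t) ^ 2) * (numEdges G) ^ 2 :=
  variance_R_one_general n G t ht2

end GraphCP
end

section
/- Under the permutation null distribution, for n ≥ 4 and 1 ≤ t1 < t2 ≤ n, the variance of the changed-interval between-group edge count satisfies Var[R_G(t1,t2)] = p2(t2−t1)·|G| + (p1(t2−t1)/2 − p2(t2−t1))·Σ_i |G_i|² + (p2(t2−t1) − p1(t2−t1)²)·|G|². -/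
open Finset Filter Asymptotics MeasureTheory Topology ProbabilityTheory

namespace GraphCP

/-!
Write `R = ∑_{e ∈ G} X_e`, where `X_e` indicates that exactly one endpoint of `e` has its label in
`A = (t₁, t₂]`, `|A| = m`. A uniform permutation sends `k` distinct vertices to a uniform injective
`k`-tuple, so their labels all lie in `A` with probability `m⋯(m-k+1) / n⋯(n-k+1)`. Expanding the
indicators as polynomials in these events gives `E[X_e] = p1` and `E[X_e X_f] = p1`, `p1/2` or `p2`
according as `e`, `f` share two, one or no vertices, that is
`E[X_e X_f] = p2 + (p1/2 - p2)·|e ∩ f| + p2·[e = f]`. Summing over pairs of edges with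
`∑_{e,f} |e ∩ f| = ∑_v deg(v)²` gives the second moment.
-/

theorem cast_descFactorial_eq_prod_range {R : Type*} [CommRing R] (a k : ℕ) :
    (a.descFactorial k : R) = ∏ j ∈ range k, ((a : R) - j) := by
  rw [← descPochhammer_eval_eq_descFactorial, descPochhammer_eval_eq_prod_range]

section PretransitiveSum

variable {G X M : Type*} [Group G] [Fintype G] [MulAction G X] [MulAction.IsPretransitive G X]
  [AddCommMonoid M]

theorem sum_smul_eq_sum_smul_of_isPretransitive (F : X → M) (x y : X) :
    ∑ g : G, F (g • x) = ∑ g : G, F (g • y) := by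
  obtain ⟨σ, rfl⟩ := MulAction.exists_smul_eq G x y
  simp_rw [smul_smul]
  exact (Equiv.sum_comp (Equiv.mulRight σ) (fun g => F (g • x))).symm

theorem card_nsmul_sum_smul_of_isPretransitive [Fintype X] (F : X → M) (x : X) :
    Fintype.card X • ∑ g : G, F (g • x) = Fintype.card G • ∑ y, F y :=
  calc Fintype.card X • ∑ g : G, F (g • x)
      = ∑ y : X, ∑ g : G, F (g • y) := by
        simp [sum_smul_eq_sum_smul_of_isPretransitive F _ x]
    _ = ∑ g : G, ∑ y : X, F (g • y) := Finset.sum_comm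
    _ = ∑ _g : G, ∑ y : X, F y := by
        congr! 1 with g
        exact Equiv.sum_comp (MulAction.toPerm g) F
    _ = Fintype.card G • ∑ y, F y := by simp

end PretransitiveSum

section Crossing

open Equiv

variable {α : Type*} [DecidableEq α] (A : Finset α)

def memInd (x : α) : ℝ := if x ∈ A then 1 else 0

theorem memInd_mul_self (x : α) : memInd A x * memInd A x = memInd A x := by
  unfold memInd; split_ifs <;> norm_num

/-- The polynomial form makes a product of crossings expand into products of `memInd`. -/
def crossing (x y : α) : ℝ := memInd A x + memInd A y - 2 * memInd A x * memInd A y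

theorem crossing_comm (x y : α) : crossing A x y = crossing A y x := by
  unfold crossing; ring

theorem crossing_mul_self (x y : α) : crossing A x y * crossing A x y = crossing A x y := by
  unfold crossing
  linear_combination (1 + 4 * (memInd A y * memInd A y - memInd A y)) * memInd_mul_self A x
    + memInd_mul_self A y

theorem crossing_mul_crossing_left (x y z : α) :
    crossing A x y * crossing A x z = memInd A x - memInd A x * memInd A y
      - memInd A x * memInd A z + memInd A y * memInd A z := by
  unfold crossing
  linear_combination (1 - 2 * memInd A y - 2 * memInd A z + 4 * memInd A y * memInd A z)
    * memInd_mul_self A x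

variable [Fintype α] {a b c d : α}

theorem sum_perm_prod_memInd (S : Finset α) :
    ∑ π : Perm α, ∏ v ∈ S, memInd A (π v)
      = (Fintype.card α).factorial * (∏ j ∈ range #S, ((#A : ℝ) - j))
        / ∏ j ∈ range #S, ((Fintype.card α : ℝ) - j) := by
  have : MulAction.IsPretransitive (Perm α) (S ↪ α) := ⟨Perm.exists_smul_eq_embedding⟩
  have key := card_nsmul_sum_smul_of_isPretransitive (G := Perm α)
    (fun g : S ↪ α => ∏ v, memInd A (g v)) (Function.Embedding.subtype _)
  have hcount : ∑ g : S ↪ α, ∏ v, memInd A (g v) = (#A).descFactorial #S := by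
    simp only [memInd, Fintype.prod_boole, Finset.sum_boole]
    rw [← Fintype.card_subtype, Fintype.card_congr ((Equiv.subtypeEquivRight (by simp)).trans
      (Equiv.codRestrict S (A : Set α))), Fintype.card_embedding_eq]
    simp
  have hpos : ((Fintype.card α).descFactorial #S : ℝ) ≠ 0 := by
    exact_mod_cast (Nat.descFactorial_pos.mpr (card_le_univ S)).ne'
  rw [hcount, Fintype.card_embedding_eq, Fintype.card_perm, Fintype.card_coe, nsmul_eq_mul,
    nsmul_eq_mul] at key
  simp only [Function.Embedding.smul_apply, Perm.smul_def, Function.Embedding.coe_subtype] at key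
  rw [← cast_descFactorial_eq_prod_range, ← cast_descFactorial_eq_prod_range, eq_div_iff hpos,
    mul_comm, ← key]
  congr! 2 with π
  exact (prod_coe_sort S (fun v => memInd A (π v))).symm

theorem sum_perm_memInd (a : α) :
    ∑ π : Perm α, memInd A (π a) = (Fintype.card α).factorial * #A / Fintype.card α := by
  simpa using sum_perm_prod_memInd A {a}

theorem sum_perm_memInd_mul_memInd (hab : a ≠ b) :
    ∑ π : Perm α, memInd A (π a) * memInd A (π b)
      = (Fintype.card α).factorial * (#A * (#A - 1))
        / (Fintype.card α * (Fintype.card α - 1)) := by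
  have h := sum_perm_prod_memInd A {a, b}
  simp [card_pair hab, prod_pair hab, prod_range_succ] at h
  linear_combination h

theorem sum_perm_memInd_mul_memInd_mul_memInd (hab : a ≠ b) (hac : a ≠ c) (hbc : b ≠ c) :
    ∑ π : Perm α, memInd A (π a) * memInd A (π b) * memInd A (π c)
      = (Fintype.card α).factorial * (#A * (#A - 1) * (#A - 2))
        / (Fintype.card α * (Fintype.card α - 1) * (Fintype.card α - 2)) := by
  have h := sum_perm_prod_memInd A {a, b, c}
  simp [prod_insert, card_insert_of_notMem, prod_pair hbc, card_pair hbc, hab, hac,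
    prod_range_succ] at h
  simp only [mul_assoc] at h ⊢
  linear_combination h

theorem sum_perm_memInd_mul_memInd_mul_memInd_mul_memInd (hab : a ≠ b) (hac : a ≠ c)
    (had : a ≠ d) (hbc : b ≠ c) (hbd : b ≠ d) (hcd : c ≠ d) :
    ∑ π : Perm α, memInd A (π a) * memInd A (π b) * memInd A (π c) * memInd A (π d)
      = (Fintype.card α).factorial * (#A * (#A - 1) * (#A - 2) * (#A - 3))
        / (Fintype.card α * (Fintype.card α - 1) * (Fintype.card α - 2)
          * (Fintype.card α - 3)) := by
  have h := sum_perm_prod_memInd A {a, b, c, d}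
  simp [prod_insert, card_insert_of_notMem, prod_pair hcd, card_pair hcd, hab, hac, had, hbc,
    hbd, prod_range_succ] at h
  simp only [mul_assoc] at h ⊢
  linear_combination h

theorem sum_perm_crossing (hab : a ≠ b) :
    ∑ π : Perm α, crossing A (π a) (π b) = (Fintype.card α).factorial * p1 (Fintype.card α) #A := by
  have hN : (2 : ℝ) ≤ Fintype.card α := by
    exact_mod_cast (card_pair hab).symm.trans_le (card_le_univ {a, b})
  simp only [crossing, sum_sub_distrib, sum_add_distrib, mul_assoc, ← mul_sum]
  rw [sum_perm_memInd, sum_perm_memInd, sum_perm_memInd_mul_memInd A hab, p1]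
  have : (Fintype.card α : ℝ) - 1 ≠ 0 := by linarith
  field_simp
  ring

theorem sum_perm_crossing_mul_crossing_left (hab : a ≠ b) (hac : a ≠ c) (hbc : b ≠ c) :
    ∑ π : Perm α, crossing A (π a) (π b) * crossing A (π a) (π c)
      = (Fintype.card α).factorial * (p1 (Fintype.card α) #A / 2) := by
  have hN : (2 : ℝ) ≤ Fintype.card α := by
    exact_mod_cast (card_pair hab).symm.trans_le (card_le_univ {a, b})
  simp only [crossing_mul_crossing_left, sum_add_distrib, sum_sub_distrib]
  rw [sum_perm_memInd, sum_perm_memInd_mul_memInd A hab, sum_perm_memInd_mul_memInd A hac,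
    sum_perm_memInd_mul_memInd A hbc, p1]
  have : (Fintype.card α : ℝ) - 1 ≠ 0 := by linarith
  field_simp
  ring

theorem sum_perm_crossing_mul_crossing_of_pairwise_ne (hab : a ≠ b) (hac : a ≠ c) (had : a ≠ d)
    (hbc : b ≠ c) (hbd : b ≠ d) (hcd : c ≠ d) :
    ∑ π : Perm α, crossing A (π a) (π b) * crossing A (π c) (π d)
      = (Fintype.card α).factorial * p2 (Fintype.card α) #A := by
  have hN : (4 : ℝ) ≤ Fintype.card α := by
    have h := card_le_univ {a, b, c, d}
    simp [card_insert_of_notMem, hab, hac, had, hbc, hbd, hcd] at h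
    exact_mod_cast h
  set U := fun x => memInd A x
  have expand : ∀ π : Perm α, crossing A (π a) (π b) * crossing A (π c) (π d)
      = U (π a) * U (π c) + U (π a) * U (π d) + U (π b) * U (π c) + U (π b) * U (π d)
        - 2 * (U (π a) * U (π c) * U (π d)) - 2 * (U (π b) * U (π c) * U (π d))
        - 2 * (U (π a) * U (π b) * U (π c)) - 2 * (U (π a) * U (π b) * U (π d))
        + 4 * (U (π a) * U (π b) * U (π c) * U (π d)) := by
    intro π; unfold crossing; ring
  simp only [expand, sum_add_distrib, sum_sub_distrib, ← mul_sum]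
  rw [sum_perm_memInd_mul_memInd A hac, sum_perm_memInd_mul_memInd A had,
    sum_perm_memInd_mul_memInd A hbc, sum_perm_memInd_mul_memInd A hbd,
    sum_perm_memInd_mul_memInd_mul_memInd A hac had hcd,
    sum_perm_memInd_mul_memInd_mul_memInd A hbc hbd hcd,
    sum_perm_memInd_mul_memInd_mul_memInd A hab hac hbc,
    sum_perm_memInd_mul_memInd_mul_memInd A hab had hbd,
    sum_perm_memInd_mul_memInd_mul_memInd_mul_memInd A hab hac had hbc hbd hcd, p2]
  have : (Fintype.card α : ℝ) - 1 ≠ 0 := by linarith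
  have : (Fintype.card α : ℝ) - 2 ≠ 0 := by linarith
  have : (Fintype.card α : ℝ) - 3 ≠ 0 := by linarith
  field_simp
  ring

end Crossing

section EdgeCrossing

open Equiv

variable {α : Type*} [DecidableEq α] (A : Finset α)

def edgeCrossing : Sym2 α → ℝ := Sym2.lift ⟨crossing A, crossing_comm A⟩

@[simp]
theorem edgeCrossing_mk (x y : α) : edgeCrossing A s(x, y) = crossing A x y := rfl

variable [Fintype α]

def overlap (e e' : Sym2 α) : ℕ := #{v | v ∈ e ∧ v ∈ e'}

theorem overlap_self {e : Sym2 α} (he : ¬e.IsDiag) : overlap e e = 2 := by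
  induction e using Sym2.ind with | _ i j => ?_
  rw [overlap, ← card_pair (Sym2.mk_isDiag_iff.not.mp he)]
  congr 1
  ext v
  simp

theorem overlap_mk_mk_left {v b c : α} (hbc : b ≠ c) : overlap s(v, b) s(v, c) = 1 := by
  rw [overlap, card_eq_one]
  refine ⟨v, ?_⟩
  ext x
  simp only [mem_filter, mem_univ, true_and, Sym2.mem_iff, mem_singleton]
  constructor
  · rintro ⟨rfl | rfl, h | h⟩
    exacts [rfl, rfl, h, absurd h hbc]
  · rintro rfl
    simp

theorem overlap_eq_zero {e e' : Sym2 α} (h : ∀ v ∈ e, v ∉ e') : overlap e e' = 0 := by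
  rw [overlap, card_eq_zero, filter_eq_empty_iff]
  exact fun v _ hv => h v hv.1 hv.2

theorem sum_perm_edgeCrossing {e : Sym2 α} (he : ¬e.IsDiag) :
    ∑ π : Perm α, edgeCrossing A (e.map π)
      = (Fintype.card α).factorial * p1 (Fintype.card α) #A := by
  induction e using Sym2.ind with | _ i j => ?_
  exact sum_perm_crossing A (Sym2.mk_isDiag_iff.not.mp he)

theorem sum_perm_edgeCrossing_mul_edgeCrossing {e e' : Sym2 α} (he : ¬e.IsDiag)
    (he' : ¬e'.IsDiag) :
    ∑ π : Perm α, edgeCrossing A (e.map π) * edgeCrossing A (e'.map π)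
      = (Fintype.card α).factorial * (p2 (Fintype.card α) #A
        + (p1 (Fintype.card α) #A / 2 - p2 (Fintype.card α) #A) * overlap e e'
        + if e = e' then p2 (Fintype.card α) #A else 0) := by
  by_cases heq : e = e'
  · subst heq
    rw [overlap_self he, if_pos rfl]
    induction e using Sym2.ind with | _ i j => ?_
    simp only [Sym2.map_mk, edgeCrossing_mk, crossing_mul_self,
      sum_perm_crossing A (Sym2.mk_isDiag_iff.not.mp he)]
    push_cast
    ring
  rw [if_neg heq]
  by_cases hshare : ∃ v, v ∈ e ∧ v ∈ e'
  · obtain ⟨v, hv, hv'⟩ := hshare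
    obtain ⟨b, rfl⟩ := Sym2.mem_iff_exists.mp hv
    obtain ⟨c, rfl⟩ := Sym2.mem_iff_exists.mp hv'
    have hbc : b ≠ c := by rintro rfl; exact heq rfl
    simp only [Sym2.map_mk, edgeCrossing_mk, overlap_mk_mk_left hbc,
      sum_perm_crossing_mul_crossing_left A (Sym2.mk_isDiag_iff.not.mp he)
        (Sym2.mk_isDiag_iff.not.mp he') hbc]
    push_cast
    ring
  · simp only [not_exists, not_and] at hshare
    rw [overlap_eq_zero hshare]
    induction e using Sym2.ind with | _ i j => ?_
    induction e' using Sym2.ind with | _ k l => ?_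
    simp only [Sym2.mem_iff, forall_eq_or_imp, forall_eq, not_or] at hshare
    simp only [Sym2.map_mk, edgeCrossing_mk,
      sum_perm_crossing_mul_crossing_of_pairwise_ne A (Sym2.mk_isDiag_iff.not.mp he)
        hshare.1.1 hshare.1.2 hshare.2.1 hshare.2.2 (Sym2.mk_isDiag_iff.not.mp he')]
    push_cast
    ring

end EdgeCrossing

section GraphMoments

open Equiv

variable {V : Type*} [Fintype V] [DecidableEq V] (G : SimpleGraph V) [DecidableRel G.Adj]

theorem sum_sum_overlap_edgeFinset :
    ∑ e ∈ G.edgeFinset, ∑ e' ∈ G.edgeFinset, overlap e e' = ∑ v, G.degree v ^ 2 :=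
  calc ∑ e ∈ G.edgeFinset, ∑ e' ∈ G.edgeFinset, overlap e e'
      = ∑ v, ∑ e ∈ G.edgeFinset, ∑ e' ∈ G.edgeFinset,
          (if v ∈ e then 1 else 0) * (if v ∈ e' then 1 else 0) := by
        simp only [overlap, card_filter, ite_zero_mul_ite_zero, mul_one]
        exact (sum_congr rfl fun _ _ => sum_comm).trans sum_comm
    _ = ∑ v, G.degree v ^ 2 := by
        simp only [← sum_mul_sum, ← sq, sum_boole]
        simp [G.incidenceFinset_eq_filter, ← G.card_incidenceFinset_eq_degree]

variable (A : Finset V)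

theorem sum_perm_sum_edgeCrossing :
    ∑ π : Perm V, ∑ e ∈ G.edgeFinset, edgeCrossing A (e.map π)
      = (Fintype.card V).factorial * (p1 (Fintype.card V) #A * #G.edgeFinset) := by
  rw [sum_comm, sum_congr rfl fun e he =>
    sum_perm_edgeCrossing A (G.not_isDiag_of_mem_edgeSet (G.mem_edgeFinset.mp he))]
  simp only [sum_const, nsmul_eq_mul]
  ring

theorem sum_perm_sq_sum_edgeCrossing :
    ∑ π : Perm V, (∑ e ∈ G.edgeFinset, edgeCrossing A (e.map π)) ^ 2
      = (Fintype.card V).factorial * (p2 (Fintype.card V) #A * #G.edgeFinset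
        + (p1 (Fintype.card V) #A / 2 - p2 (Fintype.card V) #A) * ∑ v, (G.degree v : ℝ) ^ 2
        + p2 (Fintype.card V) #A * #G.edgeFinset ^ 2) := by
  have hdiag : ∀ e ∈ G.edgeFinset, ¬e.IsDiag := fun e he =>
    G.not_isDiag_of_mem_edgeSet (G.mem_edgeFinset.mp he)
  calc ∑ π : Perm V, (∑ e ∈ G.edgeFinset, edgeCrossing A (e.map π)) ^ 2
      = ∑ e ∈ G.edgeFinset, ∑ e' ∈ G.edgeFinset,
          ∑ π : Perm V, edgeCrossing A (e.map π) * edgeCrossing A (e'.map π) := by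
        simp only [sq, sum_mul_sum]
        rw [sum_comm]
        exact sum_congr rfl fun _ _ => sum_comm
    _ = _ := by
        rw [sum_congr rfl fun e he => sum_congr rfl fun e' he' =>
          sum_perm_edgeCrossing_mul_edgeCrossing A (hdiag e he) (hdiag e' he')]
        simp only [← mul_sum, sum_add_distrib, sum_const, nsmul_eq_mul, sum_ite_eq, sum_ite_mem,
          inter_self, ← Nat.cast_sum, sum_sum_overlap_edgeFinset]
        push_cast
        ring

end GraphMoments

theorem edgeFS_eq {n : ℕ} (G : SimpleGraph (Fin n)) [DecidableRel G.Adj] :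
    edgeFS G = G.edgeFinset := by
  unfold edgeFS; congr!

theorem deg_eq {n : ℕ} (G : SimpleGraph (Fin n)) [DecidableRel G.Adj] (i : Fin n) :
    deg G i = G.degree i := by
  unfold deg; congr!

def labelIoc (n t₁ t₂ : ℕ) : Finset (Fin n) := {a | t₁ < (a : ℕ) + 1 ∧ (a : ℕ) + 1 ≤ t₂}

theorem card_labelIoc {n t₁ t₂ : ℕ} (ht₂ : t₂ ≤ n) : #(labelIoc n t₁ t₂) = t₂ - t₁ := by
  rw [← card_map Fin.valEmbedding, ← Nat.card_Ico]
  congr 1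
  ext x
  simp only [labelIoc, Finset.mem_map, mem_filter, mem_univ, true_and, Fin.valEmbedding_apply,
    mem_Ico]
  constructor
  · rintro ⟨a, ha, rfl⟩; omega
  · intro hx; exact ⟨⟨x, by omega⟩, by simp; omega, rfl⟩

theorem crossInd_gTwo {n : ℕ} (t₁ t₂ : ℕ) (π : Equiv.Perm (Fin n)) (e : Sym2 (Fin n)) :
    crossInd (gTwo n t₁ t₂ π) e = edgeCrossing (labelIoc n t₁ t₂) (e.map π) := by
  induction e using Sym2.ind with | _ i j => ?_
  simp only [crossInd, gTwo, Sym2.lift_mk, Sym2.map_mk, edgeCrossing_mk, crossing, memInd,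
    labelIoc, mem_filter, mem_univ, true_and]
  by_cases hi : t₁ < (π i : ℕ) + 1 ∧ (π i : ℕ) + 1 ≤ t₂ <;>
    by_cases hj : t₁ < (π j : ℕ) + 1 ∧ (π j : ℕ) + 1 ≤ t₂ <;>
    simp only [hi, hj, decide_false, if_false] <;> norm_num

theorem permVar_eq_permExp_sq_sub (n : ℕ) (X : Equiv.Perm (Fin n) → ℝ) :
    permVar n X = permExp n (fun π => X π ^ 2) - permExp n X ^ 2 := by
  have hfac : (n.factorial : ℝ) ≠ 0 := by positivity
  simp only [permVar, permExp, sub_sq, sum_add_distrib, sum_sub_distrib, ← sum_mul, ← mul_sum,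
    sum_const, card_univ, Fintype.card_perm, Fintype.card_fin, nsmul_eq_mul]
  field_simp
  ring

theorem variance_R_two_general (n : ℕ) (G : SimpleGraph (Fin n))
    (t₁ t₂ : ℕ) (ht2 : t₂ ≤ n) :
    permVar n (Rtwo G t₁ t₂) =
      p2 n (t₂ - t₁) * numEdges G + (p1 n (t₂ - t₁) / 2 - p2 n (t₂ - t₁)) * degSq G
        + (p2 n (t₂ - t₁) - (p1 n (t₂ - t₁)) ^ 2) * (numEdges G) ^ 2 := by
  classical
  have hR : Rtwo G t₁ t₂ = fun π : Equiv.Perm (Fin n) =>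
      ∑ e ∈ G.edgeFinset, edgeCrossing (labelIoc n t₁ t₂) (e.map π) := by
    ext π
    simp only [Rtwo, crossInd_gTwo, edgeFS_eq]
  have hfac : (n.factorial : ℝ) ≠ 0 := by positivity
  rw [permVar_eq_permExp_sq_sub, hR, permExp, permExp, sum_perm_sq_sum_edgeCrossing,
    sum_perm_sum_edgeCrossing, Fintype.card_fin, card_labelIoc ht2]
  simp only [numEdges, degSq, edgeFS_eq, deg_eq]
  field_simp
  ring

/-- Under the permutation null distribution, for `n ≥ 4` and `1 ≤ t₁ < t₂ ≤ n`,
`Var[R_G(t₁,t₂)] = p2(t₂−t₁)·|G| + (p1(t₂−t₁)/2 − p2(t₂−t₁))·Σᵢ|Gᵢ|²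
  + (p2(t₂−t₁) − p1(t₂−t₁)²)·|G|²`. -/
theorem variance_R_two (n : ℕ) (hn : 4 ≤ n) (G : SimpleGraph (Fin n))
    (t₁ t₂ : ℕ) (ht1 : 1 ≤ t₁) (ht12 : t₁ < t₂) (ht2 : t₂ ≤ n) :
    permVar n (Rtwo G t₁ t₂) =
      p2 n (t₂ - t₁) * numEdges G + (p1 n (t₂ - t₁) / 2 - p2 n (t₂ - t₁)) * degSq G
        + (p2 n (t₂ - t₁) - (p1 n (t₂ - t₁)) ^ 2) * (numEdges G) ^ 2 :=
  variance_R_two_general n G t₁ t₂ ht2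

end GraphCP
end
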